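/- For a finite group G, the pullback functor along the algebra isomorphism λ (λ(g)=g, λ(δ_g)=δ_g⁰+δ_{gz}¹) sends a D(G)-module V to a module Λ(V) which equals V as a G-module but has G-grading Λ(V)_g = V_g⁰ ⊕ V_{gz}¹, and Λ is an equivalence of categories from D(G)-mod to itself satisfying Λ(V ⊗_z W) ≅ Λ(V) ⊗̄ Λ(W) naturally, where ⊗_z is the z-twisted fiberwise tensor product (V⊗_z W)_g = ⊕_{σ,τ∈Z/2} V^σ_{gz^τ} ⊗ W^τ_{gz^σ} and ⊗̄ is the fiberwise tensor product (V⊗̄W)_g = V_g ⊗ W_g. -/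

import Mathlib

/-!
STATEMENT 17: For a finite group `G` with central `z`, `z² = e`, the pullback
functor `Λ` along the algebra isomorphism `λ` (`λ(g) = g`,
`λ(δ_g) = δ_g⁰ + δ_{gz}¹`) sends a `D(G)`-module `V` to a module `Λ(V)` which
equals `V` as a `G`-module but has `G`-grading `Λ(V)_g = V_g⁰ ⊕ V_{gz}¹`, and
`Λ` is an equivalence of categories from `D(G)`-mod to itself satisfying
`Λ(V ⊗_z W) ≅ Λ(V) ⊗̄ Λ(W)` naturally, where `⊗_z` is the `z`-twisted
fiberwise tensor product `(V ⊗_z W)_g = ⊕_{σ,τ} V^σ_{gz^τ} ⊗ W^τ_{gz^σ}`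
and `⊗̄` is the fiberwise tensor product `(V ⊗̄ W)_g = V_g ⊗ W_g`.

`D(G)`-modules are modeled as `G`-equivariant bundles over `G`: a `k`-module
with `G`-action `ρ` and complete orthogonal fiber projections `π g`.  The
even/odd parts `V^σ` are cut out by the parity projections
`p^σ = (1 + (−1)^σ ρ(z))/2`.  `Λ(V)` keeps the same action and has the fiber
projections `Λπ_g = π_g ∘ p⁰ + π_{gz} ∘ p¹`.  The theorem asserts:
(a) `Λ(V)` is again a bundle (with the same `G`-action), so `Λ` is a
well-defined functor; (b) `Λ(V)_g = V_g⁰ ⊕ V_{gz}¹`; (c) `Λ ∘ Λ = id` on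
fiber projections, so `Λ` is an equivalence (an involution); (d) the fiber
projections of `Λ(V ⊗_z W)` and of `Λ(V) ⊗̄ Λ(W)` on `V.M ⊗ W.M` coincide,
giving the natural isomorphism `Λ(V ⊗_z W) ≅ Λ(V) ⊗̄ Λ(W)` (as the identity).
Both tensor products carry the diagonal `G`-action.
-/

open TensorProduct

/-- A `G`-equivariant vector bundle over `G`, i.e. a `D(G)`-module. -/
structure GEqBundle (k G : Type) [Field k] [Group G] [Fintype G] where
  M : Type
  [acg : AddCommGroup M]
  [mod : Module k M]
  ρ : G → (M →ₗ[k] M)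
  ρ_one : ρ 1 = LinearMap.id
  ρ_mul : ∀ g h : G, ρ (g * h) = ρ g ∘ₗ ρ h
  π : G → (M →ₗ[k] M)
  π_idem : ∀ g, π g ∘ₗ π g = π g
  π_orth : ∀ g h, g ≠ h → π g ∘ₗ π h = 0
  π_total : ∑ g : G, π g = LinearMap.id
  compat : ∀ h g, ρ h ∘ₗ π g = π (h * g * h⁻¹) ∘ₗ ρ h

attribute [instance] GEqBundle.acg GEqBundle.mod

section

variable (k : Type) [Field k]

/-- The parity projection `(1 + (−1)^σ a)/2` associated to an involution `a`
(the action of the central element `z`). -/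
noncomputable def parityProj {M : Type} [AddCommGroup M] [Module k M]
    (a : M →ₗ[k] M) (σ : Bool) : M →ₗ[k] M :=
  (2 : k)⁻¹ • (LinearMap.id + (if σ then (-1 : k) else (1 : k)) • a)

/-- The `Λ`-twisted family of fiber projections:
`Λπ_g = π_g ∘ p⁰ + π_{gz} ∘ p¹`, where `p^σ` are the parity projections of the
`z`-action `a`. -/
noncomputable def lamAux {G M : Type} [Group G] [AddCommGroup M] [Module k M]
    (a : M →ₗ[k] M) (πf : G → (M →ₗ[k] M)) (z g : G) : M →ₗ[k] M :=
  πf g ∘ₗ parityProj k a false + πf (g * z) ∘ₗ parityProj k a true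

/-- `z^σ` for `σ ∈ Z/2`. -/
def zpow2 {G : Type} [Group G] (z : G) (σ : Bool) : G := if σ then z else 1

end

/-- The fiber projections of the `z`-twisted fiberwise tensor product
`(V ⊗_z W)_g = ⊕_{σ,τ} V^σ_{gz^τ} ⊗ W^τ_{gz^σ}` on the ambient space
`V.M ⊗ W.M`. -/
noncomputable def twistPi (k G : Type) [Field k] [Group G] [Fintype G]
    (z : G) (V W : GEqBundle k G) (g : G) :
    (V.M ⊗[k] W.M) →ₗ[k] (V.M ⊗[k] W.M) :=
  ∑ σ : Bool, ∑ τ : Bool,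
    TensorProduct.map (V.π (g * zpow2 z τ) ∘ₗ parityProj k (V.ρ z) σ)
      (W.π (g * zpow2 z σ) ∘ₗ parityProj k (W.ρ z) τ)

/-!
The parity projections `p^σ` of the involution `ρ z` commute with every `π x` and every `ρ h`
because `z` is central, so the blocks `π x ∘ p^σ` are orthogonal idempotents indexed by
`G × Z/2`. `Λπ_g` is the sum of the blocks `(g, 0)` and `(gz, 1)`; this gives the bundle axioms
and the grading, and applying `Λ` twice moves the odd part back by `z² = e`. On `V ⊗ W` the
diagonal `z`-action has `p⁰ = p⁰ ⊗ p⁰ + p¹ ⊗ p¹` and `p¹ = p⁰ ⊗ p¹ + p¹ ⊗ p⁰`, which sorts the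
four summands of `(V ⊗_z W)_g` into `Λ(V)_g ⊗ Λ(W)_g`.
-/

namespace LinearMap

variable {R M : Type} [Ring R] [AddCommGroup M] [Module R M]

theorem range_comp_eq_inf_of_commute {f g : Module.End R M} (hf : IsIdempotentElem f)
    (hg : IsIdempotentElem g) (hfg : Commute f g) :
    range (f ∘ₗ g) = range f ⊓ range g := by
  refine le_antisymm (le_inf (range_comp_le_range g f) ?_) ?_
  · exact (congrArg range hfg.eq).le.trans (range_comp_le_range f g)
  · rintro x ⟨hxf, hxg⟩
    refine ⟨x, ?_⟩
    rw [comp_apply, (IsIdempotentElem.mem_range_iff hg).mp hxg,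
      (IsIdempotentElem.mem_range_iff hf).mp hxf]

theorem range_add_eq_sup_of_mul_eq_zero {f g : Module.End R M} (hf : IsIdempotentElem f)
    (hg : IsIdempotentElem g) (hfg : f * g = 0) (hgf : g * f = 0) :
    range (f + g) = range f ⊔ range g := by
  refine le_antisymm (range_add_le f g) (sup_le ?_ ?_)
  · calc range f = range ((f + g) * f) := by rw [add_mul, hf.eq, hgf, add_zero]
      _ ≤ range (f + g) := range_comp_le_range f (f + g)
  · calc range g = range ((f + g) * g) := by rw [add_mul, hg.eq, hfg, zero_add]
      _ ≤ range (f + g) := range_comp_le_range g (f + g)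

end LinearMap

section Parity

variable {k M N : Type} [Field k] [AddCommGroup M] [Module k M] [AddCommGroup N] [Module k N]

theorem parityProj_false_add_parityProj_true [NeZero (2 : k)] (a : M →ₗ[k] M) :
    parityProj k a false + parityProj k a true = LinearMap.id := by
  ext x
  simp only [parityProj, LinearMap.add_apply, LinearMap.smul_apply, LinearMap.id_apply]
  simp only [Bool.false_eq_true, if_false, if_true, smul_add, smul_smul]
  match_scalars <;> field_simp <;> ring

theorem parityProj_comp_parityProj [NeZero (2 : k)] {a : M →ₗ[k] M}
    (ha : a ∘ₗ a = LinearMap.id) (σ τ : Bool) :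
    parityProj k a σ ∘ₗ parityProj k a τ = if σ = τ then parityProj k a σ else 0 := by
  have ha' (x : M) : a (a x) = x := LinearMap.congr_fun ha x
  cases σ <;> cases τ <;>
  · ext x
    simp only [parityProj, LinearMap.comp_apply, LinearMap.add_apply, LinearMap.smul_apply,
      LinearMap.id_apply, LinearMap.zero_apply, map_add, map_smul, ha', Bool.false_eq_true,
      Bool.true_eq_false, ↓reduceIte, smul_add, smul_smul]
    match_scalars <;> field_simp <;> ring

theorem isIdempotentElem_parityProj [NeZero (2 : k)] {a : M →ₗ[k] M}
    (ha : a ∘ₗ a = LinearMap.id) (σ : Bool) : IsIdempotentElem (parityProj k a σ) :=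
  (parityProj_comp_parityProj ha σ σ).trans (if_pos rfl)

theorem Commute.parityProj_right {f a : M →ₗ[k] M} (hfa : Commute f a) (σ : Bool) :
    Commute f (parityProj k a σ) :=
  ((Commute.one_right f).add_right (hfa.smul_right _)).smul_right _

theorem parityProj_map_false [NeZero (2 : k)] (a : M →ₗ[k] M) (b : N →ₗ[k] N) :
    parityProj k (map a b) false =
      map (parityProj k a false) (parityProj k b false)
        + map (parityProj k a true) (parityProj k b true) := by
  ext x y
  simp only [parityProj, AlgebraTensorModule.curry_apply, curry_apply,
    LinearMap.restrictScalars_self, LinearMap.add_apply, map_tmul, LinearMap.smul_apply,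
    LinearMap.id_apply, Bool.false_eq_true, if_true, if_false]
  simp only [add_tmul, tmul_add, ← smul_tmul', tmul_smul, smul_add]
  match_scalars <;> field_simp <;> ring

theorem parityProj_map_true [NeZero (2 : k)] (a : M →ₗ[k] M) (b : N →ₗ[k] N) :
    parityProj k (map a b) true =
      map (parityProj k a false) (parityProj k b true)
        + map (parityProj k a true) (parityProj k b false) := by
  ext x y
  simp only [parityProj, AlgebraTensorModule.curry_apply, curry_apply,
    LinearMap.restrictScalars_self, LinearMap.add_apply, map_tmul, LinearMap.smul_apply,
    LinearMap.id_apply, Bool.false_eq_true, if_true, if_false]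
  simp only [add_tmul, tmul_add, ← smul_tmul', tmul_smul, smul_add]
  match_scalars <;> field_simp <;> ring

end Parity

section LamAux

variable {k G M : Type} [Field k] [NeZero (2 : k)] [Group G] [AddCommGroup M] [Module k M]

theorem sum_lamAux [Fintype G] (a : M →ₗ[k] M) {πf : G → (M →ₗ[k] M)}
    (hπ : ∑ g, πf g = LinearMap.id) (z : G) :
    ∑ g, lamAux k a πf z g = LinearMap.id := by
  have hshift : ∑ g, πf (g * z) = ∑ g, πf g := Equiv.sum_comp (Equiv.mulRight z) πf
  calc ∑ g, lamAux k a πf z g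
      = (∑ g, πf g) * parityProj k a false + (∑ g, πf (g * z)) * parityProj k a true := by
        simp only [lamAux, Finset.sum_add_distrib, Finset.sum_mul]; rfl
    _ = LinearMap.id := by
        rw [hshift, hπ]
        exact parityProj_false_add_parityProj_true a

theorem lamAux_lamAux {a : M →ₗ[k] M} (ha : a ∘ₗ a = LinearMap.id) (πf : G → (M →ₗ[k] M))
    {z : G} (hz2 : z * z = 1) (g : G) :
    lamAux k a (lamAux k a πf z) z g = πf g := by
  simp only [lamAux, LinearMap.add_comp, LinearMap.comp_assoc, parityProj_comp_parityProj ha]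
  simp only [if_true, Bool.false_eq_true, Bool.true_eq_false, if_false, LinearMap.comp_zero,
    add_zero, zero_add, mul_assoc, hz2, mul_one]
  rw [← LinearMap.comp_add, parityProj_false_add_parityProj_true, LinearMap.comp_id]

end LamAux

namespace GEqBundle

variable {k G : Type} [Field k] [Group G] [Fintype G] (V : GEqBundle k G) {z : G}

theorem ρ_comp_ρ_eq_id (hz2 : z * z = 1) : V.ρ z ∘ₗ V.ρ z = LinearMap.id := by
  rw [← V.ρ_mul, hz2, V.ρ_one]

theorem commute_ρ_ρ_of_central (hzc : ∀ a : G, z * a = a * z) (h : G) :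
    Commute (V.ρ h) (V.ρ z) := by
  change V.ρ h ∘ₗ V.ρ z = V.ρ z ∘ₗ V.ρ h
  rw [← V.ρ_mul, ← V.ρ_mul, hzc h]

theorem commute_π_ρ_of_central (hzc : ∀ a : G, z * a = a * z) (g : G) :
    Commute (V.π g) (V.ρ z) := by
  change V.π g ∘ₗ V.ρ z = V.ρ z ∘ₗ V.π g
  rw [V.compat z g, hzc g, mul_inv_cancel_right]

theorem π_comp_parityProj_comp (hzc : ∀ a : G, z * a = a * z) (x y : G) (σ τ : Bool) :
    (V.π x ∘ₗ parityProj k (V.ρ z) σ) ∘ₗ (V.π y ∘ₗ parityProj k (V.ρ z) τ)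
      = (V.π x ∘ₗ V.π y) ∘ₗ (parityProj k (V.ρ z) σ ∘ₗ parityProj k (V.ρ z) τ) :=
  ((V.commute_π_ρ_of_central hzc y).parityProj_right σ).symm.mul_mul_mul_comm _ _

theorem π_comp_parityProj_comp_of_ne_left (hzc : ∀ a : G, z * a = a * z) {x y : G}
    (hxy : x ≠ y) (σ τ : Bool) :
    (V.π x ∘ₗ parityProj k (V.ρ z) σ) ∘ₗ (V.π y ∘ₗ parityProj k (V.ρ z) τ) = 0 := by
  rw [π_comp_parityProj_comp V hzc, V.π_orth x y hxy, LinearMap.zero_comp]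

theorem ρ_comp_lamAux (hzc : ∀ a : G, z * a = a * z) (h g : G) :
    V.ρ h ∘ₗ lamAux k (V.ρ z) V.π z g = lamAux k (V.ρ z) V.π z (h * g * h⁻¹) ∘ₗ V.ρ h := by
  have hconj : h * (g * z) * h⁻¹ = h * g * h⁻¹ * z := by simp only [mul_assoc, hzc h⁻¹]
  have hρ (σ : Bool) : V.ρ h ∘ₗ parityProj k (V.ρ z) σ = parityProj k (V.ρ z) σ ∘ₗ V.ρ h :=
    ((V.commute_ρ_ρ_of_central hzc h).parityProj_right σ).eq
  simp only [lamAux, LinearMap.comp_add, LinearMap.add_comp, ← LinearMap.comp_assoc, V.compat,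
    hconj]
  simp only [LinearMap.comp_assoc, hρ]

variable [NeZero (2 : k)]

theorem isIdempotentElem_π_comp_parityProj (hzc : ∀ a : G, z * a = a * z) (hz2 : z * z = 1)
    (x : G) (σ : Bool) : IsIdempotentElem (V.π x ∘ₗ parityProj k (V.ρ z) σ) := by
  change (V.π x ∘ₗ _) ∘ₗ (V.π x ∘ₗ _) = _
  rw [π_comp_parityProj_comp V hzc, V.π_idem, parityProj_comp_parityProj (V.ρ_comp_ρ_eq_id hz2),
    if_pos rfl]

theorem π_comp_parityProj_comp_of_ne_right (hzc : ∀ a : G, z * a = a * z) (hz2 : z * z = 1)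
    (x y : G) {σ τ : Bool} (hστ : σ ≠ τ) :
    (V.π x ∘ₗ parityProj k (V.ρ z) σ) ∘ₗ (V.π y ∘ₗ parityProj k (V.ρ z) τ) = 0 := by
  rw [π_comp_parityProj_comp V hzc, parityProj_comp_parityProj (V.ρ_comp_ρ_eq_id hz2),
    if_neg hστ, LinearMap.comp_zero]

theorem lamAux_comp_lamAux (hzc : ∀ a : G, z * a = a * z) (hz2 : z * z = 1) (g : G) :
    lamAux k (V.ρ z) V.π z g ∘ₗ lamAux k (V.ρ z) V.π z g = lamAux k (V.ρ z) V.π z g := by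
  refine IsIdempotentElem.add (V.isIdempotentElem_π_comp_parityProj hzc hz2 g false)
    (V.isIdempotentElem_π_comp_parityProj hzc hz2 (g * z) true) ?_
  rw [Module.End.mul_eq_comp, Module.End.mul_eq_comp,
    V.π_comp_parityProj_comp_of_ne_right hzc hz2 _ _ Bool.false_ne_true,
    V.π_comp_parityProj_comp_of_ne_right hzc hz2 _ _ Bool.false_ne_true.symm, add_zero]

theorem lamAux_comp_lamAux_of_ne (hzc : ∀ a : G, z * a = a * z) (hz2 : z * z = 1) {g h : G}
    (hgh : g ≠ h) : lamAux k (V.ρ z) V.π z g ∘ₗ lamAux k (V.ρ z) V.π z h = 0 := by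
  simp only [lamAux, LinearMap.add_comp, LinearMap.comp_add,
    V.π_comp_parityProj_comp_of_ne_left hzc hgh,
    V.π_comp_parityProj_comp_of_ne_left hzc (mul_left_injective z |>.ne hgh),
    V.π_comp_parityProj_comp_of_ne_right hzc hz2 _ _ Bool.false_ne_true,
    V.π_comp_parityProj_comp_of_ne_right hzc hz2 _ _ Bool.false_ne_true.symm, add_zero]

theorem range_lamAux (hzc : ∀ a : G, z * a = a * z) (hz2 : z * z = 1) (g : G) :
    LinearMap.range (lamAux k (V.ρ z) V.π z g)
      = (LinearMap.range (V.π g) ⊓ LinearMap.range (parityProj k (V.ρ z) false))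
        ⊔ (LinearMap.range (V.π (g * z)) ⊓ LinearMap.range (parityProj k (V.ρ z) true)) := by
  have hp := isIdempotentElem_parityProj (V.ρ_comp_ρ_eq_id hz2)
  rw [lamAux, LinearMap.range_add_eq_sup_of_mul_eq_zero
      (V.isIdempotentElem_π_comp_parityProj hzc hz2 g false)
      (V.isIdempotentElem_π_comp_parityProj hzc hz2 (g * z) true)
      (V.π_comp_parityProj_comp_of_ne_right hzc hz2 _ _ Bool.false_ne_true)
      (V.π_comp_parityProj_comp_of_ne_right hzc hz2 _ _ Bool.false_ne_true.symm),
    LinearMap.range_comp_eq_inf_of_commute (V.π_idem g) (hp false)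
      ((V.commute_π_ρ_of_central hzc g).parityProj_right false),
    LinearMap.range_comp_eq_inf_of_commute (V.π_idem (g * z)) (hp true)
      ((V.commute_π_ρ_of_central hzc (g * z)).parityProj_right true)]

theorem twistPi_comp_map_parityProj (W : GEqBundle k G) (hz2 : z * z = 1) (g : G) (α β : Bool) :
    twistPi k G z V W g ∘ₗ map (parityProj k (V.ρ z) α) (parityProj k (W.ρ z) β)
      = map (V.π (g * zpow2 z β) ∘ₗ parityProj k (V.ρ z) α)
          (W.π (g * zpow2 z α) ∘ₗ parityProj k (W.ρ z) β) := by
  simp only [twistPi, ← Module.End.mul_eq_comp, Finset.sum_mul, ← TensorProduct.map_mul]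
  simp only [Module.End.mul_eq_comp, LinearMap.comp_assoc,
    parityProj_comp_parityProj (V.ρ_comp_ρ_eq_id hz2),
    parityProj_comp_parityProj (W.ρ_comp_ρ_eq_id hz2)]
  cases α <;> cases β <;> simp

theorem lamAux_twistPi (W : GEqBundle k G) (hz2 : z * z = 1) (g : G) :
    lamAux k (map (V.ρ z) (W.ρ z)) (twistPi k G z V W) z g
      = map (lamAux k (V.ρ z) V.π z g) (lamAux k (W.ρ z) W.π z g) := by
  have hgzz : g * z * z = g := by rw [mul_assoc, hz2, mul_one]
  rw [lamAux, parityProj_map_false, parityProj_map_true]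
  simp only [LinearMap.comp_add, V.twistPi_comp_map_parityProj W hz2, zpow2, if_true,
    Bool.false_eq_true, if_false, mul_one, hgzz]
  simp only [lamAux, map_add_left, map_add_right]
  abel

end GEqBundle

/-- `Λ(V)` is a bundle with grading `Λ(V)_g = V_g⁰ ⊕ V_{gz}¹`, `Λ` is an
involutive equivalence, and `Λ(V ⊗_z W) ≅ Λ(V) ⊗̄ Λ(W)` (the fiber
projections agree on the nose). -/
theorem lambda_pullback_equivalence (k G : Type) [Field k] [CharZero k]
    [Group G] [Fintype G] (z : G) (hzc : ∀ a : G, z * a = a * z)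
    (hz2 : z * z = 1) (V W : GEqBundle k G) :
    -- (a) `Λ(V)` (same `G`-action, fiber projections `Λπ`) is again a bundle:
    (∀ g : G, lamAux k (V.ρ z) V.π z g ∘ₗ lamAux k (V.ρ z) V.π z g
      = lamAux k (V.ρ z) V.π z g) ∧
    (∀ g h : G, g ≠ h →
      lamAux k (V.ρ z) V.π z g ∘ₗ lamAux k (V.ρ z) V.π z h = 0) ∧
    (∑ g : G, lamAux k (V.ρ z) V.π z g = LinearMap.id) ∧
    (∀ h g : G, V.ρ h ∘ₗ lamAux k (V.ρ z) V.π z g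
      = lamAux k (V.ρ z) V.π z (h * g * h⁻¹) ∘ₗ V.ρ h) ∧
    -- (b) the new grading is `Λ(V)_g = V_g⁰ ⊕ V_{gz}¹`:
    (∀ g : G, LinearMap.range (lamAux k (V.ρ z) V.π z g)
      = (LinearMap.range (V.π g) ⊓ LinearMap.range (parityProj k (V.ρ z) false))
        ⊔ (LinearMap.range (V.π (g * z)) ⊓ LinearMap.range (parityProj k (V.ρ z) true))) ∧
    -- (c) `Λ` is involutive, hence an equivalence of `D(G)`-mod with itself:
    (∀ g : G, lamAux k (V.ρ z) (fun a => lamAux k (V.ρ z) V.π z a) z g = V.π g) ∧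
    -- (d) `Λ(V ⊗_z W) = Λ(V) ⊗̄ Λ(W)`: the fiber projections agree:
    (∀ g : G,
      lamAux k (TensorProduct.map (V.ρ z) (W.ρ z)) (twistPi k G z V W) z g
        = TensorProduct.map (lamAux k (V.ρ z) V.π z g) (lamAux k (W.ρ z) W.π z g)) :=
  ⟨V.lamAux_comp_lamAux hzc hz2,
    fun _ _ hgh => V.lamAux_comp_lamAux_of_ne hzc hz2 hgh,
    sum_lamAux (V.ρ z) V.π_total z,
    V.ρ_comp_lamAux hzc,
    V.range_lamAux hzc hz2,
    lamAux_lamAux (V.ρ_comp_ρ_eq_id hz2) V.π hz2,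
    V.lamAux_twistPi W hz2⟩
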